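/- Let n ≥ 1, Ω ⊂ ℝⁿ open and bounded, ε > 0, λ̄ ∈ (0,1), and W̃ : ℝ → [0,1] Lipschitz with constant L. Then there exists a constant C, depending only on ε, L and the Lebesgue measure of Ω, such that for all bounded continuous u₁, u₂ : Ω → ℝ, | inf_φ A_{u₁,ε}(φ) − inf_φ A_{u₂,ε}(φ) | ≤ C ‖u₁ − u₂‖_∞, where both infima are taken over the admissible class of continuously differentiable φ : Ω → ℝ with φ, W(φ) and |∇φ|^2 Lebesgue integrable on Ω. In particular, the map u ↦ inf_φ A_{u,ε}(φ) is Lipschitz continuous with respect to the supremum norm. -/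

import Mathlib

open MeasureTheory

/-- The double-well potential `W(s) = (1/4)(1-s²)²`. -/
noncomputable def W (s : ℝ) : ℝ := (1 / 4) * (1 - s ^ 2) ^ 2

/-- The component-detecting functional
`A_{u,ε}(φ) = |∫_Ω (1/ε) W̃(u) φ| + ∫_Ω (9ε^{-3/2} W̃(λ̄u) + ε) W(φ) + ∫_Ω (8ε^{-3/2} W̃(λ̄u) + ε) |∇φ|²`. -/
noncomputable def Afun {n : ℕ} (Ω : Set (EuclideanSpace ℝ (Fin n))) (ε lamb : ℝ)
    (Wt : ℝ → ℝ) (u φ : EuclideanSpace ℝ (Fin n) → ℝ) : ℝ :=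
  |∫ x in Ω, (1 / ε) * Wt (u x) * φ x| +
    (∫ x in Ω, (9 * ε ^ (-(3 : ℝ) / 2) * Wt (lamb * u x) + ε) * W (φ x)) +
    ∫ x in Ω, (8 * ε ^ (-(3 : ℝ) / 2) * Wt (lamb * u x) + ε) * ‖fderiv ℝ φ x‖ ^ 2

/-- The admissible class: continuously differentiable `φ` with `φ`, `W(φ)` and `|∇φ|²`
Lebesgue integrable on `Ω`. -/
def AdmSet {n : ℕ} (Ω : Set (EuclideanSpace ℝ (Fin n))) :
    Set (EuclideanSpace ℝ (Fin n) → ℝ) :=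
  {φ | ContDiff ℝ 1 φ ∧ IntegrableOn φ Ω ∧ IntegrableOn (fun x => W (φ x)) Ω ∧
    IntegrableOn (fun x => ‖fderiv ℝ φ x‖ ^ 2) Ω}

open Set

/-
For fixed `φ` the coefficients of `A_{u,ε}(φ)` depend on `u` only through `W̃(u)` and `W̃(λ̄u)`,
so `A_{u₁,ε}(φ) ≤ A_{u₂,ε}(φ) + L M S(φ)` with
`S(φ) = (1/ε) ∫|φ| + 9ε^{-3/2} ∫W(φ) + 8ε^{-3/2} ∫|∇φ|²`. Every coefficient is at least `ε` and
`|s| ≤ 3 + W(s)`, so `ε S(φ) ≤ 3|Ω| + (1/ε + 9ε^{-3/2}) A_{u₂,ε}(φ)`. Only `φ` with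
`A_{u₂,ε}(φ) < A_{u₂,ε}(0) + 1 ≤ (9ε^{-3/2} + ε)|Ω|/4 + 1` matter for the infimum, and for them
`S(φ)` is bounded uniformly.
-/

lemma W_nonneg (s : ℝ) : 0 ≤ W s := by unfold W; positivity

lemma W_zero : W 0 = 1 / 4 := by norm_num [W]

lemma abs_le_three_add_W (s : ℝ) : |s| ≤ 3 + W s := by
  unfold W
  rcases abs_cases s with ⟨h, _⟩ | ⟨h, _⟩ <;> rw [h] <;>
    nlinarith [sq_nonneg (s ^ 2 - 2), sq_nonneg (s - 1), sq_nonneg (s + 1)]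

theorem csInf_image_le_csInf_image_add {α : Type*} {f g : α → ℝ} {s : Set α} {B D : ℝ}
    (hf : BddBelow (f '' s)) (hg : BddBelow (g '' s)) (hB : ∃ x ∈ s, g x < B)
    (hfg : ∀ x ∈ s, g x < B → f x ≤ g x + D) :
    sInf (f '' s) ≤ sInf (g '' s) + D := by
  obtain ⟨x₀, hx₀, hgx₀⟩ := hB
  have hlt : sInf (g '' s) < B := (csInf_le hg (mem_image_of_mem g hx₀)).trans_lt hgx₀
  refine le_of_forall_pos_le_add fun δ hδ => ?_
  obtain ⟨_, ⟨x, hx, rfl⟩, hgx⟩ :=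
    Real.lt_sInf_add_pos ⟨_, mem_image_of_mem g hx₀⟩ (lt_min hδ (sub_pos.2 hlt))
  have hfx := hfg x hx (by linarith [min_le_right δ (B - sInf (g '' s))])
  linarith [csInf_le hf (mem_image_of_mem f hx), min_le_left δ (B - sInf (g '' s))]

section WeightedIntegral

variable {X : Type*} [MeasurableSpace X] {μ : Measure X} {Wt : ℝ → ℝ} {v v₁ v₂ g : X → ℝ}
  {k m M : ℝ}

theorem Integrable.weight_mul (hWt : Continuous Wt) (hWt01 : ∀ s, Wt s ∈ Icc (0 : ℝ) 1)
    (hv : AEStronglyMeasurable v μ) (hg : Integrable g μ) (k m : ℝ) :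
    Integrable (fun x => (k * Wt (v x) + m) * g x) μ := by
  refine hg.bdd_mul (c := |k| + |m|)
    (((hWt.comp_aestronglyMeasurable hv).const_mul k).add_const m) (ae_of_all _ fun x => ?_)
  have hWt1 : |Wt (v x)| ≤ 1 := abs_le.2 ⟨by linarith [(hWt01 (v x)).1], (hWt01 (v x)).2⟩
  calc ‖k * Wt (v x) + m‖ ≤ |k| * |Wt (v x)| + |m| := by
        rw [Real.norm_eq_abs, ← abs_mul]; exact abs_add_le _ _
    _ ≤ |k| + |m| := by gcongr; exact mul_le_of_le_one_right (abs_nonneg k) hWt1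

theorem mul_integral_le_integral_weight_mul (hWt01 : ∀ s, Wt s ∈ Icc (0 : ℝ) 1) (hk : 0 ≤ k)
    (hg0 : ∀ x, 0 ≤ g x) (hg : Integrable g μ)
    (hWg : Integrable (fun x => (k * Wt (v x) + m) * g x) μ) :
    m * ∫ x, g x ∂μ ≤ ∫ x, (k * Wt (v x) + m) * g x ∂μ := by
  rw [← integral_const_mul]
  refine integral_mono (hg.const_mul m) hWg fun x => ?_
  have := mul_nonneg (mul_nonneg hk (hWt01 (v x)).1) (hg0 x)
  simp only
  linarith

theorem abs_integral_weight_mul_sub_le {K : NNReal} (hWt : LipschitzWith K Wt)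
    (h₁ : Integrable (fun x => (k * Wt (v₁ x) + m) * g x) μ)
    (h₂ : Integrable (fun x => (k * Wt (v₂ x) + m) * g x) μ) (hg : Integrable g μ)
    (hv : ∀ᵐ x ∂μ, |v₁ x - v₂ x| ≤ M) :
    |∫ x, (k * Wt (v₁ x) + m) * g x ∂μ - ∫ x, (k * Wt (v₂ x) + m) * g x ∂μ| ≤
      |k| * K * M * ∫ x, |g x| ∂μ := by
  rw [← integral_sub h₁ h₂, ← integral_const_mul]
  refine norm_integral_le_of_norm_le (G := ℝ) (hg.abs.const_mul _) ?_
  filter_upwards [hv] with x hx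
  calc ‖(k * Wt (v₁ x) + m) * g x - (k * Wt (v₂ x) + m) * g x‖
        = |k| * |Wt (v₁ x) - Wt (v₂ x)| * |g x| := by
          rw [Real.norm_eq_abs, ← sub_mul, add_sub_add_right_eq_sub, ← mul_sub, abs_mul, abs_mul]
    _ ≤ |k| * (K * M) * |g x| := by
          gcongr
          exact (hWt.dist_le_mul _ _).trans (mul_le_mul_of_nonneg_left hx K.2)
    _ = |k| * K * M * |g x| := by ring

theorem integral_abs_le_three_add_integral_W [IsFiniteMeasure μ] {φ : X → ℝ}
    (hW : Integrable (fun x => W (φ x)) μ) :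
    ∫ x, |φ x| ∂μ ≤ 3 * μ.real univ + ∫ x, W (φ x) ∂μ := by
  calc ∫ x, |φ x| ∂μ ≤ ∫ x, (3 + W (φ x)) ∂μ :=
        integral_mono_of_nonneg (ae_of_all _ fun x => abs_nonneg _)
          ((integrable_const 3).add hW) (ae_of_all _ fun x => abs_le_three_add_W (φ x))
    _ = 3 * μ.real univ + ∫ x, W (φ x) ∂μ := by
        rw [integral_add (integrable_const 3) hW, integral_const, smul_eq_mul, mul_comm]

end WeightedIntegral

section Afun

variable {n : ℕ} {Ω : Set (EuclideanSpace ℝ (Fin n))} {ε lamb : ℝ} {Wt : ℝ → ℝ}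
  {u u₁ u₂ φ : EuclideanSpace ℝ (Fin n) → ℝ}

theorem Afun_nonneg (hε : 0 ≤ ε) (hWt01 : ∀ s, Wt s ∈ Icc (0 : ℝ) 1) :
    0 ≤ Afun Ω ε lamb Wt u φ := by
  have hcoef : ∀ a : ℝ, 0 ≤ a → ∀ x, 0 ≤ a * ε ^ (-(3 : ℝ) / 2) * Wt (lamb * u x) + ε :=
    fun a ha x => by have := (hWt01 (lamb * u x)).1; positivity
  have h₂ : 0 ≤ ∫ x in Ω, (9 * ε ^ (-(3 : ℝ) / 2) * Wt (lamb * u x) + ε) * W (φ x) :=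
    integral_nonneg fun x => mul_nonneg (hcoef 9 (by norm_num) x) (W_nonneg _)
  have h₃ : 0 ≤ ∫ x in Ω, (8 * ε ^ (-(3 : ℝ) / 2) * Wt (lamb * u x) + ε) * ‖fderiv ℝ φ x‖ ^ 2 :=
    integral_nonneg fun x => mul_nonneg (hcoef 8 (by norm_num) x) (sq_nonneg _)
  unfold Afun
  positivity

theorem zero_mem_AdmSet (hΩ : volume Ω ≠ ⊤) : (0 : EuclideanSpace ℝ (Fin n) → ℝ) ∈ AdmSet Ω := by
  refine ⟨contDiff_const, integrableOn_zero, ?_, ?_⟩ <;>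
    simp only [Pi.zero_apply, W_zero, fderiv_zero, norm_zero] <;> exact integrableOn_const hΩ

theorem Afun_zero_le (hΩ : volume Ω ≠ ⊤) (hε : 0 ≤ ε) (hWt01 : ∀ s, Wt s ∈ Icc (0 : ℝ) 1)
    (hWt : Continuous Wt) (hu : Continuous u) :
    Afun Ω ε lamb Wt u 0 ≤ (9 * ε ^ (-(3 : ℝ) / 2) + ε) / 4 * volume.real Ω := by
  have hc := Real.rpow_nonneg hε (-(3 : ℝ) / 2)
  simp only [Afun, Pi.zero_apply, W_zero, fderiv_zero, mul_zero, integral_zero, abs_zero,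
    zero_add, norm_zero, ne_eq, OfNat.ofNat_ne_zero, not_false_eq_true, zero_pow, add_zero]
  calc ∫ x in Ω, (9 * ε ^ (-(3 : ℝ) / 2) * Wt (lamb * u x) + ε) * (1 / 4)
      ≤ ∫ x in Ω, (9 * ε ^ (-(3 : ℝ) / 2) + ε) * (1 / 4) := by
        refine integral_mono (Integrable.weight_mul hWt hWt01
          (by fun_prop : Continuous fun x => lamb * u x).aestronglyMeasurable
          (integrableOn_const hΩ) _ _) (integrableOn_const hΩ) fun x => ?_
        nlinarith [mul_le_mul_of_nonneg_left (hWt01 (lamb * u x)).2 hc]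
    _ = (9 * ε ^ (-(3 : ℝ) / 2) + ε) / 4 * volume.real Ω := by
        rw [setIntegral_const, smul_eq_mul]; ring

theorem mul_integral_add_le_Afun (hε : 0 ≤ ε) (hWt01 : ∀ s, Wt s ∈ Icc (0 : ℝ) 1)
    (hWt : Continuous Wt) (hu : Continuous u) (hφ : φ ∈ AdmSet Ω) :
    ε * ((∫ x in Ω, W (φ x)) + ∫ x in Ω, ‖fderiv ℝ φ x‖ ^ 2) ≤ Afun Ω ε lamb Wt u φ := by
  obtain ⟨-, -, hW, hG⟩ := hφ
  have hv : AEStronglyMeasurable (fun x => lamb * u x) (volume.restrict Ω) :=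
    (continuous_const.mul hu).aestronglyMeasurable
  have h₂ := mul_integral_le_integral_weight_mul hWt01 (by positivity) (fun x => W_nonneg (φ x))
    hW (Integrable.weight_mul hWt hWt01 hv hW (9 * ε ^ (-(3 : ℝ) / 2)) ε)
  have h₃ := mul_integral_le_integral_weight_mul hWt01 (by positivity) (fun x => sq_nonneg _)
    hG (Integrable.weight_mul hWt hWt01 hv hG (8 * ε ^ (-(3 : ℝ) / 2)) ε)
  have h₁ := abs_nonneg (∫ x in Ω, (1 / ε) * Wt (u x) * φ x)
  unfold Afun
  linarith

noncomputable def AfunSensitivity (Ω : Set (EuclideanSpace ℝ (Fin n))) (ε : ℝ)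
    (φ : EuclideanSpace ℝ (Fin n) → ℝ) : ℝ :=
  1 / ε * (∫ x in Ω, |φ x|) + 9 * ε ^ (-(3 : ℝ) / 2) * (∫ x in Ω, W (φ x)) +
    8 * ε ^ (-(3 : ℝ) / 2) * (∫ x in Ω, ‖fderiv ℝ φ x‖ ^ 2)

theorem AfunSensitivity_le (hΩ : volume Ω ≠ ⊤) (hε : 0 < ε)
    (hWt01 : ∀ s, Wt s ∈ Icc (0 : ℝ) 1) (hWt : Continuous Wt) (hu : Continuous u)
    (hφ : φ ∈ AdmSet Ω) :
    AfunSensitivity Ω ε φ ≤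
      (3 * volume.real Ω + (1 / ε + 9 * ε ^ (-(3 : ℝ) / 2)) * Afun Ω ε lamb Wt u φ) / ε := by
  have hA := mul_integral_add_le_Afun (lamb := lamb) hε.le hWt01 hWt hu hφ
  obtain ⟨-, -, hW, -⟩ := hφ
  have := isFiniteMeasure_restrict.2 hΩ
  have habs := integral_abs_le_three_add_integral_W hW
  rw [measureReal_restrict_apply_univ] at habs
  have hIG : 0 ≤ ∫ x in Ω, ‖fderiv ℝ φ x‖ ^ 2 := integral_nonneg fun x => sq_nonneg _
  have hc := Real.rpow_nonneg hε.le (-(3 : ℝ) / 2)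
  set c := ε ^ (-(3 : ℝ) / 2)
  rw [AfunSensitivity, le_div_iff₀ hε]
  calc (1 / ε * (∫ x in Ω, |φ x|) + 9 * c * (∫ x in Ω, W (φ x)) +
          8 * c * (∫ x in Ω, ‖fderiv ℝ φ x‖ ^ 2)) * ε
      = (∫ x in Ω, |φ x|) + 9 * c * ε * (∫ x in Ω, W (φ x)) +
          8 * c * ε * (∫ x in Ω, ‖fderiv ℝ φ x‖ ^ 2) := by field_simp
    _ ≤ 3 * volume.real Ω + (1 + 9 * c * ε) *
          ((∫ x in Ω, W (φ x)) + ∫ x in Ω, ‖fderiv ℝ φ x‖ ^ 2) := by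
        nlinarith [mul_nonneg (mul_nonneg hc hε.le) hIG]
    _ = 3 * volume.real Ω + (1 / ε + 9 * c) *
          (ε * ((∫ x in Ω, W (φ x)) + ∫ x in Ω, ‖fderiv ℝ φ x‖ ^ 2)) := by
        field_simp
    _ ≤ 3 * volume.real Ω + (1 / ε + 9 * c) * Afun Ω ε lamb Wt u φ := by gcongr

theorem Afun_le_Afun_add (hΩm : MeasurableSet Ω) (hε : 0 ≤ ε) (hlamb : |lamb| ≤ 1)
    (hWt01 : ∀ s, Wt s ∈ Icc (0 : ℝ) 1) {K : NNReal} (hWt : LipschitzWith K Wt)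
    (hu₁ : Continuous u₁) (hu₂ : Continuous u₂) (hφ : φ ∈ AdmSet Ω) {M : ℝ}
    (hd : ∀ x ∈ Ω, |u₁ x - u₂ x| ≤ M) :
    Afun Ω ε lamb Wt u₁ φ ≤ Afun Ω ε lamb Wt u₂ φ + K * M * AfunSensitivity Ω ε φ := by
  obtain ⟨-, hφi, hW, hG⟩ := hφ
  have hd' : ∀ᵐ x ∂volume.restrict Ω, |u₁ x - u₂ x| ≤ M := ae_restrict_of_forall_mem hΩm hd
  have hdlamb : ∀ᵐ x ∂volume.restrict Ω, |lamb * u₁ x - lamb * u₂ x| ≤ M :=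
    hd'.mono fun x hx => by
      rw [← mul_sub, abs_mul]
      exact (mul_le_of_le_one_left (abs_nonneg _) hlamb).trans hx
  have hint : ∀ {v g : EuclideanSpace ℝ (Fin n) → ℝ}, Continuous v → IntegrableOn g Ω →
      ∀ k m : ℝ, IntegrableOn (fun x => (k * Wt (v x) + m) * g x) Ω :=
    fun hv hg => Integrable.weight_mul hWt.continuous hWt01 hv.aestronglyMeasurable hg
  have h₁ := abs_integral_weight_mul_sub_le hWt (hint hu₁ hφi (1 / ε) 0) (hint hu₂ hφi _ _)
    hφi hd'
  have hv₁ : Continuous fun x => lamb * u₁ x := by fun_prop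
  have hv₂ : Continuous fun x => lamb * u₂ x := by fun_prop
  have h₂ := abs_integral_weight_mul_sub_le hWt
    (hint hv₁ hW (9 * ε ^ (-(3 : ℝ) / 2)) ε)
    (hint hv₂ hW _ _) hW hdlamb
  have h₃ := abs_integral_weight_mul_sub_le hWt
    (hint hv₁ hG (8 * ε ^ (-(3 : ℝ) / 2)) ε)
    (hint hv₂ hG _ _) hG hdlamb
  simp only [add_zero] at h₁
  simp only [abs_of_nonneg (by positivity : (0 : ℝ) ≤ 1 / ε),
    abs_of_nonneg (by positivity : (0 : ℝ) ≤ 9 * ε ^ (-(3 : ℝ) / 2)),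
    abs_of_nonneg (by positivity : (0 : ℝ) ≤ 8 * ε ^ (-(3 : ℝ) / 2)),
    abs_of_nonneg (W_nonneg _), abs_pow, abs_norm] at h₁ h₂ h₃
  have h₁' := (abs_sub_abs_le_abs_sub _ _).trans h₁
  unfold Afun AfunSensitivity
  linarith [(abs_le.1 h₂).2, (abs_le.1 h₃).2]

noncomputable def infAfunLipConst (ε L v : ℝ) : ℝ :=
  L * (3 * v + (1 / ε + 9 * ε ^ (-(3 : ℝ) / 2)) *
    ((9 * ε ^ (-(3 : ℝ) / 2) + ε) / 4 * v + 1)) / ε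

theorem sInf_Afun_le_add (hΩm : MeasurableSet Ω) (hΩ : volume Ω ≠ ⊤) (hε : 0 < ε)
    (hlamb : |lamb| ≤ 1) (hWt01 : ∀ s, Wt s ∈ Icc (0 : ℝ) 1) {K : NNReal}
    (hWt : LipschitzWith K Wt) (hu₁ : Continuous u₁) (hu₂ : Continuous u₂) {M : ℝ} (hM : 0 ≤ M)
    (hd : ∀ x ∈ Ω, |u₁ x - u₂ x| ≤ M) :
    sInf ((fun φ => Afun Ω ε lamb Wt u₁ φ) '' AdmSet Ω) ≤
      sInf ((fun φ => Afun Ω ε lamb Wt u₂ φ) '' AdmSet Ω) +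
        infAfunLipConst ε K (volume.real Ω) * M := by
  have hbdd : ∀ u, BddBelow ((fun φ => Afun Ω ε lamb Wt u φ) '' AdmSet Ω) := fun u =>
    ⟨0, by rintro _ ⟨φ, -, rfl⟩; exact Afun_nonneg hε.le hWt01⟩
  refine csInf_image_le_csInf_image_add (hbdd u₁) (hbdd u₂)
    ⟨0, zero_mem_AdmSet hΩ, (Afun_zero_le hΩ hε.le hWt01 hWt.continuous hu₂).trans_lt
      (lt_add_one _)⟩ fun φ hφ hA => ?_
  calc Afun Ω ε lamb Wt u₁ φ
      ≤ Afun Ω ε lamb Wt u₂ φ + K * M * AfunSensitivity Ω ε φ :=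
        Afun_le_Afun_add hΩm hε.le hlamb hWt01 hWt hu₁ hu₂ hφ hd
    _ ≤ Afun Ω ε lamb Wt u₂ φ + K * M *
          ((3 * volume.real Ω + (1 / ε + 9 * ε ^ (-(3 : ℝ) / 2)) * Afun Ω ε lamb Wt u₂ φ) / ε) := by
        gcongr
        exact AfunSensitivity_le hΩ hε hWt01 hWt.continuous hu₂ hφ
    _ ≤ Afun Ω ε lamb Wt u₂ φ + K * M * ((3 * volume.real Ω + (1 / ε + 9 * ε ^ (-(3 : ℝ) / 2)) *
          ((9 * ε ^ (-(3 : ℝ) / 2) + ε) / 4 * volume.real Ω + 1)) / ε) := by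
        gcongr
    _ = Afun Ω ε lamb Wt u₂ φ + infAfunLipConst ε K (volume.real Ω) * M := by
        unfold infAfunLipConst; ring

end Afun

theorem infA_lipschitz_general (n : ℕ)
    (Ω : Set (EuclideanSpace ℝ (Fin n))) (hΩo : IsOpen Ω) (hΩb : Bornology.IsBounded Ω)
    (ε : ℝ) (hε : 0 < ε) (lamb : ℝ) (hlamb : lamb ∈ Set.Ioo (0 : ℝ) 1)
    (Wt : ℝ → ℝ) (L : ℝ) (hL : 0 ≤ L)
    (hWt01 : ∀ s, Wt s ∈ Set.Icc (0 : ℝ) 1)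
    (hWtLip : ∀ s t : ℝ, |Wt s - Wt t| ≤ L * |s - t|) :
    ∃ C : ℝ, 0 < C ∧
      ∀ u₁ u₂ : EuclideanSpace ℝ (Fin n) → ℝ,
        Continuous u₁ → (∃ M, ∀ x, |u₁ x| ≤ M) →
        Continuous u₂ → (∃ M, ∀ x, |u₂ x| ≤ M) →
        ∀ M : ℝ, 0 ≤ M → (∀ x ∈ Ω, |u₁ x - u₂ x| ≤ M) →
          |sInf ((fun φ => Afun Ω ε lamb Wt u₁ φ) '' AdmSet Ω) -
              sInf ((fun φ => Afun Ω ε lamb Wt u₂ φ) '' AdmSet Ω)| ≤ C * M := by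
  lift L to NNReal using hL
  have hLip : LipschitzWith L Wt := LipschitzWith.of_dist_le_mul hWtLip
  have hlamb' : |lamb| ≤ 1 := abs_le.2 ⟨by linarith [hlamb.1], hlamb.2.le⟩
  have hC : 0 ≤ infAfunLipConst ε L (volume.real Ω) := by
    have := Real.rpow_nonneg hε.le (-(3 : ℝ) / 2)
    unfold infAfunLipConst; positivity
  have hΩm := hΩo.measurableSet
  have hΩ : volume Ω ≠ ⊤ := hΩb.measure_lt_top.ne
  refine ⟨infAfunLipConst ε L (volume.real Ω) + 1, by positivity,
    fun u₁ u₂ hu₁ _ hu₂ _ M hM hd => abs_sub_le_iff.2 ⟨?_, ?_⟩⟩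
  · have := sInf_Afun_le_add hΩm hΩ hε hlamb' hWt01 hLip hu₁ hu₂ hM hd
    linarith
  · have := sInf_Afun_le_add hΩm hΩ hε hlamb' hWt01 hLip hu₂ hu₁ hM
      fun x hx => abs_sub_comm (u₁ x) (u₂ x) ▸ hd x hx
    linarith

/-- The map `u ↦ inf_φ A_{u,ε}(φ)` is Lipschitz continuous in the supremum norm, with a
constant depending only on `ε`, the Lipschitz constant `L` of `W̃`, and `Ω`. -/
theorem infA_lipschitz (n : ℕ) (hn : 1 ≤ n)
    (Ω : Set (EuclideanSpace ℝ (Fin n))) (hΩo : IsOpen Ω) (hΩb : Bornology.IsBounded Ω)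
    (ε : ℝ) (hε : 0 < ε) (lamb : ℝ) (hlamb : lamb ∈ Set.Ioo (0 : ℝ) 1)
    (Wt : ℝ → ℝ) (L : ℝ) (hL : 0 ≤ L)
    (hWt01 : ∀ s, Wt s ∈ Set.Icc (0 : ℝ) 1)
    (hWtLip : ∀ s t : ℝ, |Wt s - Wt t| ≤ L * |s - t|) :
    ∃ C : ℝ, 0 < C ∧
      ∀ u₁ u₂ : EuclideanSpace ℝ (Fin n) → ℝ,
        Continuous u₁ → (∃ M, ∀ x, |u₁ x| ≤ M) →
        Continuous u₂ → (∃ M, ∀ x, |u₂ x| ≤ M) →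
        ∀ M : ℝ, 0 ≤ M → (∀ x ∈ Ω, |u₁ x - u₂ x| ≤ M) →
          |sInf ((fun φ => Afun Ω ε lamb Wt u₁ φ) '' AdmSet Ω) -
              sInf ((fun φ => Afun Ω ε lamb Wt u₂ φ) '' AdmSet Ω)| ≤ C * M :=
  infA_lipschitz_general n Ω hΩo hΩb ε hε lamb hlamb Wt L hL hWt01 hWtLip
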